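/- Let (X,ρ) be a metric space, r̃ ∈ (0,1), and a ≤ ã ≤ b positive integers. Let K₁, …, K_a be pairwise disjoint finite subsets of X such that any two distinct points of ⋃_{j=1}^{a} K_j have distance at least 3r̃. Let K̃₁ ⊆ K̃₂ ⊆ ⋯ ⊆ K̃_{ã} be subsets of X with ⋃_{j=1}^{n} K_j ⊆ K̃_n for n = 1, …, a and K̃_{ã} = ⋃_{j=1}^{a} K_j. Let L₁ ⊆ L₂ ⊆ ⋯ ⊆ L_b be finite subsets of X with Hausdorff distance d(L_n, K̃_n) ≤ r̃ for every n = 1, …, ã. Then every x ∈ L_{ã} has a unique point p(x) ∈ ⋃_{j=1}^{a} K_j with ρ(x, p(x)) ≤ r̃ (its parent). For x ∈ L_b let n₂(x) denote the least n with x ∈ L_n. If for n = 1, …, a one defines L̃_n = { x ∈ L_{ã} : the least m with p(x) ∈ K̃_m equals n₂(x), and p(x) ∈ K_n }, then the Hausdorff distance satisfies d(L̃_n, K_n) ≤ r̃ for every n = 1, …, a. -/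

import Mathlib

/-!
Points of `⋃ Kⱼ` are `3r̃`-separated, so a point within `r̃` of one of them is within `r̃` of no
other; this makes the parent unique, and since `d(Lₘ, K̃ₘ) ≤ r̃` the parent of a point of `Lₘ`
already lies in `K̃ₘ`, i.e. `m₁(x) ≤ n₂(x)`. Conversely, let `y ∈ Kₙ` first appear in `K̃ₘ₀`
and pick `x ∈ Lₘ₀` within `r̃` of `y`. Then `p(x) = y`, so `m₁(x) = m₀ ≥ n₂(x) ≥ m₁(x)`, and
`x ∈ L̃ₙ` is the required point close to `y`.
-/

open Metric

open scoped Classical in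
/-- The Hausdorff distance between subsets of a metric space, with the convention that
`hDist A ∅ = hDist ∅ A = 1` whenever `A` is nonempty. -/
noncomputable def hDist {X : Type*} [MetricSpace X] (A B : Set X) : ℝ :=
  if A.Nonempty ↔ B.Nonempty then Metric.hausdorffDist A B else 1

section HausdorffDistance

variable {X : Type*} [MetricSpace X] {A B S : Set X} {r : ℝ} {x y z : X}

theorem hDist_comm (A B : Set X) : hDist A B = hDist B A := by
  classical
  exact if_congr Iff.comm hausdorffDist_comm rfl

theorem exists_dist_le_of_hDist_le (hr : r < 1) (hA : Bornology.IsBounded A)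
    (hB : IsCompact B) (h : hDist A B ≤ r) (hx : x ∈ A) : ∃ y ∈ B, dist x y ≤ r := by
  by_cases hAB : A.Nonempty ↔ B.Nonempty
  · rw [hDist, if_pos hAB] at h
    have hBne : B.Nonempty := hAB.mp ⟨x, hx⟩
    obtain ⟨y, hy, hxy⟩ := hB.exists_infDist_eq_dist hBne x
    refine ⟨y, hy, hxy ▸ (infDist_le_hausdorffDist_of_mem hx ?_).trans h⟩
    exact hausdorffEDist_ne_top_of_nonempty_of_bounded ⟨x, hx⟩ hBne hA hB.isBounded
  · rw [hDist, if_neg hAB] at h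
    exact absurd h hr.not_ge

theorem hDist_le_of_forall_exists_dist_le (hr : 0 ≤ r) (hAB : ∀ x ∈ A, ∃ y ∈ B, dist x y ≤ r)
    (hBA : ∀ y ∈ B, ∃ x ∈ A, dist y x ≤ r) : hDist A B ≤ r := by
  have hAB_ne : A.Nonempty ↔ B.Nonempty :=
    ⟨fun ⟨x, hx⟩ ↦ (hAB x hx).imp fun _ h ↦ h.1, fun ⟨y, hy⟩ ↦ (hBA y hy).imp fun _ h ↦ h.1⟩
  rw [hDist, if_pos hAB_ne]
  exact hausdorffDist_le_of_mem_dist hr hAB hBA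

theorem Set.Pairwise.eq_of_dist_le (hS : S.Pairwise fun y z ↦ 2 * r < dist y z)
    (hy : y ∈ S) (hz : z ∈ S) (hxy : dist x y ≤ r) (hxz : dist x z ≤ r) : y = z := by
  by_contra hyz
  linarith [hS hy hz hyz, dist_triangle_left y z x]

theorem Set.Pairwise.existsUnique_dist_le (hS : S.Pairwise fun y z ↦ 2 * r < dist y z)
    (h : ∃ y ∈ S, dist x y ≤ r) : ∃! y, y ∈ S ∧ dist x y ≤ r := by
  obtain ⟨y, hy, hxy⟩ := h
  exact ⟨y, ⟨hy, hxy⟩, fun z hz ↦ hS.eq_of_dist_le hz.1 hy hz.2 hxy⟩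

theorem hDist_setOf_parent_mem_le (hr : 0 ≤ r) {P : X → Prop} {p : X → X}
    (hp : ∀ x ∈ A, dist x (p x) ≤ r) (hB : ∀ y ∈ B, ∃ x ∈ A, P x ∧ p x = y ∧ dist x y ≤ r) :
    hDist {x ∈ A | P x ∧ p x ∈ B} B ≤ r := by
  refine hDist_le_of_forall_exists_dist_le hr (fun x hx ↦ ⟨p x, hx.2.2, hp x hx.1⟩) ?_
  intro y hy
  obtain ⟨x, hx, hPx, hpx, hxy⟩ := hB y hy
  exact ⟨x, ⟨hx, hPx, hpx ▸ hy⟩, dist_comm x y ▸ hxy⟩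

end HausdorffDistance

def IsFirstLevel {α : Type*} (s : ℕ → Set α) (N : ℕ) (x : α) (m : ℕ) : Prop :=
  x ∈ s m ∧ 1 ≤ m ∧ m ≤ N ∧ ∀ k, 1 ≤ k → k ≤ N → x ∈ s k → m ≤ k

namespace IsFirstLevel

variable {α : Type*} {s : ℕ → Set α} {N M m m' : ℕ} {x : α}

theorem le (h : IsFirstLevel s N x m) {k : ℕ} (hk : 1 ≤ k) (hkN : k ≤ N) (hx : x ∈ s k) :
    m ≤ k :=
  h.2.2.2 k hk hkN hx

theorem unique (h : IsFirstLevel s N x m) (h' : IsFirstLevel s N x m') : m = m' :=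
  (h.le h'.2.1 h'.2.2.1 h'.1).antisymm (h'.le h.2.1 h.2.2.1 h.1)

theorem of_le (h : IsFirstLevel s N x m) (hx : x ∈ s M) (hM : 1 ≤ M) (hMN : M ≤ N) :
    IsFirstLevel s M x m :=
  ⟨h.1, h.2.1, h.le hM hMN hx, fun _ hk hkM ↦ h.le hk (hkM.trans hMN)⟩

theorem exists_of_mem (hx : x ∈ s M) (hM : 1 ≤ M) (hMN : M ≤ N) : ∃ m, IsFirstLevel s N x m := by
  classical
  have hex : ∃ k, 1 ≤ k ∧ k ≤ N ∧ x ∈ s k := ⟨M, hM, hMN, hx⟩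
  obtain ⟨h1, hN, hxs⟩ := Nat.find_spec hex
  exact ⟨Nat.find hex, hxs, h1, hN, fun k hk hkN hxk ↦ Nat.find_min' hex ⟨hk, hkN, hxk⟩⟩

end IsFirstLevel

section Levels

variable {X : Type*} [MetricSpace X] {r : ℝ} {S B : Set X} {N : ℕ} {K L : ℕ → Set X}

theorem hDist_setOf_firstLevel_eq_le (hr : 0 ≤ r) (hS : S.Pairwise fun y z ↦ 2 * r < dist y z)
    (hKS : ∀ m, 1 ≤ m → m ≤ N → K m ⊆ S)
    (hLK : ∀ m, 1 ≤ m → m ≤ N → ∀ x ∈ L m, ∃ y ∈ K m, dist x y ≤ r)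
    (hKL : ∀ m, 1 ≤ m → m ≤ N → ∀ y ∈ K m, ∃ x ∈ L m, dist y x ≤ r)
    (hL : ∀ m, 1 ≤ m → m ≤ N → L m ⊆ L N) (hB : ∀ y ∈ B, ∃ m, 1 ≤ m ∧ m ≤ N ∧ y ∈ K m)
    {p : X → X} {n₂ m₁ : X → ℕ} (hp : ∀ x ∈ L N, p x ∈ S ∧ dist x (p x) ≤ r)
    (hn₂ : ∀ x ∈ L N, IsFirstLevel L N x (n₂ x))
    (hm₁ : ∀ x ∈ L N, IsFirstLevel K N (p x) (m₁ x)) :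
    hDist {x ∈ L N | m₁ x = n₂ x ∧ p x ∈ B} B ≤ r := by
  have hparent : ∀ m, 1 ≤ m → m ≤ N → ∀ x ∈ L m, ∀ y ∈ S, dist x y ≤ r → y ∈ K m := by
    intro m h1 hN x hx y hy hxy
    obtain ⟨z, hz, hxz⟩ := hLK m h1 hN x hx
    exact hS.eq_of_dist_le (hKS m h1 hN hz) hy hxz hxy ▸ hz
  refine hDist_setOf_parent_mem_le hr (fun x hx ↦ (hp x hx).2) fun y hy ↦ ?_
  obtain ⟨hyS, m₀, hm₀⟩ : y ∈ S ∧ ∃ m₀, IsFirstLevel K N y m₀ := by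
    obtain ⟨m, h1, hN, hyK⟩ := hB y hy
    exact ⟨hKS m h1 hN hyK, IsFirstLevel.exists_of_mem hyK h1 hN⟩
  have ⟨hyK, h1, hN, _⟩ := hm₀
  obtain ⟨x, hx, hyx⟩ := hKL m₀ h1 hN y hyK
  have hxN : x ∈ L N := hL m₀ h1 hN hx
  obtain ⟨hpS, hxp⟩ := hp x hxN
  have hpx : p x = y := hS.eq_of_dist_le hpS hyS hxp (dist_comm y x ▸ hyx)
  have hm₁_eq : m₁ x = m₀ := (hm₁ x hxN).unique (hpx ▸ hm₀)
  have hn₂_le : n₂ x ≤ m₀ := (hn₂ x hxN).le h1 hN hx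
  obtain ⟨hxn₂, hn₂1, hn₂N, -⟩ := hn₂ x hxN
  have hm₁_le : m₁ x ≤ n₂ x := (hm₁ x hxN).le hn₂1 hn₂N (hparent _ hn₂1 hn₂N x hxn₂ _ hpS hxp)
  exact ⟨x, hxN, by omega, hpx, dist_comm y x ▸ hyx⟩

end Levels

theorem stmt_7_general {X : Type*} [MetricSpace X] (r' : ℝ) (hr : r' ∈ Set.Ioo (0:ℝ) 1)
    (a a' b : ℕ) (ha : 0 < a) (haa' : a ≤ a') (ha'b : a' ≤ b)
    (K : ℕ → Set X)
    (hKfin : ∀ n, 1 ≤ n → n ≤ a → (K n).Finite)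
    (hKsep : ∀ x ∈ ⋃ j ∈ Set.Icc 1 a, K j, ∀ y ∈ ⋃ j ∈ Set.Icc 1 a, K j,
      x ≠ y → 3 * r' ≤ dist x y)
    (K' : ℕ → Set X)
    (hK'mono : ∀ m n, 1 ≤ m → m ≤ n → n ≤ a' → K' m ⊆ K' n)
    (hKK' : ∀ n, 1 ≤ n → n ≤ a → (⋃ j ∈ Set.Icc 1 n, K j) ⊆ K' n)
    (hK'top : K' a' = ⋃ j ∈ Set.Icc 1 a, K j)
    (L : ℕ → Set X)
    (hLfin : ∀ n, 1 ≤ n → n ≤ b → (L n).Finite)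
    (hLmono : ∀ m n, 1 ≤ m → m ≤ n → n ≤ b → L m ⊆ L n)
    (hdL : ∀ n, 1 ≤ n → n ≤ a' → hDist (L n) (K' n) ≤ r') :
    (∀ x ∈ L a', ∃! y, y ∈ ⋃ j ∈ Set.Icc 1 a, K j ∧ dist x y ≤ r') ∧
    ∀ (p : X → X) (n₂ m₁ : X → ℕ),
      (∀ x ∈ L a', p x ∈ ⋃ j ∈ Set.Icc 1 a, K j ∧ dist x (p x) ≤ r') →
      (∀ x ∈ L b, x ∈ L (n₂ x) ∧ 1 ≤ n₂ x ∧ n₂ x ≤ b ∧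
        ∀ m, 1 ≤ m → m ≤ b → x ∈ L m → n₂ x ≤ m) →
      (∀ x ∈ L a', p x ∈ K' (m₁ x) ∧ 1 ≤ m₁ x ∧ m₁ x ≤ a' ∧
        ∀ m, 1 ≤ m → m ≤ a' → p x ∈ K' m → m₁ x ≤ m) →
      ∀ n, 1 ≤ n → n ≤ a →
        hDist {x ∈ L a' | m₁ x = n₂ x ∧ p x ∈ K n} (K n) ≤ r' := by
  obtain ⟨hr0, hr1⟩ := hr
  set U := ⋃ j ∈ Set.Icc 1 a, K j
  have ha'1 : 1 ≤ a' := ha.trans_le haa'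
  have hUsep : U.Pairwise fun y z ↦ 2 * r' < dist y z := fun y hy z hz hyz ↦ by
    linarith [hKsep y hy z hz hyz]
  have hK'U : ∀ m, 1 ≤ m → m ≤ a' → K' m ⊆ U := fun m h1 h2 ↦ hK'top ▸ hK'mono m a' h1 h2 le_rfl
  have hK'fin : ∀ m, 1 ≤ m → m ≤ a' → (K' m).Finite := fun m h1 h2 ↦
    ((Set.finite_Icc 1 a).biUnion fun j hj ↦ hKfin j hj.1 hj.2).subset (hK'U m h1 h2)
  have hLfin' : ∀ m, 1 ≤ m → m ≤ a' → (L m).Finite := fun m h1 h2 ↦ hLfin m h1 (h2.trans ha'b)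
  have hLK' : ∀ m, 1 ≤ m → m ≤ a' → ∀ x ∈ L m, ∃ y ∈ K' m, dist x y ≤ r' := fun m h1 h2 _ ↦
    exists_dist_le_of_hDist_le hr1 (hLfin' m h1 h2).isBounded (hK'fin m h1 h2).isCompact
      (hdL m h1 h2)
  have hK'L : ∀ m, 1 ≤ m → m ≤ a' → ∀ y ∈ K' m, ∃ x ∈ L m, dist y x ≤ r' := fun m h1 h2 _ ↦
    exists_dist_le_of_hDist_le hr1 (hK'fin m h1 h2).isBounded (hLfin' m h1 h2).isCompact
      (hDist_comm (L m) _ ▸ hdL m h1 h2)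
  refine ⟨fun x hx ↦ hUsep.existsUnique_dist_le ?_, fun p n₂ m₁ hp hn₂ hm₁ n hn1 hna ↦ ?_⟩
  · obtain ⟨z, hz, hxz⟩ := hLK' a' ha'1 le_rfl x hx
    exact ⟨z, hK'U a' ha'1 le_rfl hz, hxz⟩
  refine hDist_setOf_firstLevel_eq_le hr0.le hUsep hK'U hLK' hK'L
    (fun m h1 h2 ↦ hLmono m a' h1 h2 ha'b)
    (fun y hy ↦ ⟨n, hn1, hna.trans haa', hKK' n hn1 hna (Set.mem_biUnion ⟨hn1, le_rfl⟩ hy)⟩)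
    hp (fun x hx ↦ IsFirstLevel.of_le (hn₂ x (hLmono a' b ha'1 ha'b le_rfl hx)) hx ha'1 ha'b) hm₁

/-- Let `(X,ρ)` be a metric space, `r' ∈ (0,1)` (written `r̃` in the
paper), and `a ≤ a' ≤ b` positive integers (`a' ` is written `ã`). Let `K₁, …, K_a` be
pairwise disjoint finite subsets of `X` such that any two distinct points of
`⋃_{j=1}^a Kⱼ` have distance at least `3r'`. Let `K'₁ ⊆ ⋯ ⊆ K'_{a'}` (written `K̃ₙ`) be
subsets with `⋃_{j=1}^n Kⱼ ⊆ K'ₙ` for `n = 1, …, a` and `K'_{a'} = ⋃_{j=1}^a Kⱼ`.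
Let `L₁ ⊆ ⋯ ⊆ L_b` be finite subsets with `d(Lₙ, K'ₙ) ≤ r'` for `n = 1, …, a'`. Then every
`x ∈ L_{a'}` has a unique parent `p(x) ∈ ⋃_{j=1}^a Kⱼ` with `ρ(x, p(x)) ≤ r'`; and with
`n₂(x)` the least `n` with `x ∈ Lₙ` and `m₁(x)` the least `m` with `p(x) ∈ K'ₘ`, defining
`L'ₙ = {x ∈ L_{a'} : m₁(x) = n₂(x) and p(x) ∈ Kₙ}` one has `d(L'ₙ, Kₙ) ≤ r'` for
`n = 1, …, a`. -/
theorem stmt_7 {X : Type*} [MetricSpace X] (r' : ℝ) (hr : r' ∈ Set.Ioo (0:ℝ) 1)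
    (a a' b : ℕ) (ha : 0 < a) (haa' : a ≤ a') (ha'b : a' ≤ b)
    (K : ℕ → Set X)
    (hKfin : ∀ n, 1 ≤ n → n ≤ a → (K n).Finite)
    (hKdisj : ∀ m n, 1 ≤ m → m < n → n ≤ a → Disjoint (K m) (K n))
    (hKsep : ∀ x ∈ ⋃ j ∈ Set.Icc 1 a, K j, ∀ y ∈ ⋃ j ∈ Set.Icc 1 a, K j,
      x ≠ y → 3 * r' ≤ dist x y)
    (K' : ℕ → Set X)
    (hK'mono : ∀ m n, 1 ≤ m → m ≤ n → n ≤ a' → K' m ⊆ K' n)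
    (hKK' : ∀ n, 1 ≤ n → n ≤ a → (⋃ j ∈ Set.Icc 1 n, K j) ⊆ K' n)
    (hK'top : K' a' = ⋃ j ∈ Set.Icc 1 a, K j)
    (L : ℕ → Set X)
    (hLfin : ∀ n, 1 ≤ n → n ≤ b → (L n).Finite)
    (hLmono : ∀ m n, 1 ≤ m → m ≤ n → n ≤ b → L m ⊆ L n)
    (hdL : ∀ n, 1 ≤ n → n ≤ a' → hDist (L n) (K' n) ≤ r') :
    (∀ x ∈ L a', ∃! y, y ∈ ⋃ j ∈ Set.Icc 1 a, K j ∧ dist x y ≤ r') ∧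
    ∀ (p : X → X) (n₂ m₁ : X → ℕ),
      (∀ x ∈ L a', p x ∈ ⋃ j ∈ Set.Icc 1 a, K j ∧ dist x (p x) ≤ r') →
      (∀ x ∈ L b, x ∈ L (n₂ x) ∧ 1 ≤ n₂ x ∧ n₂ x ≤ b ∧
        ∀ m, 1 ≤ m → m ≤ b → x ∈ L m → n₂ x ≤ m) →
      (∀ x ∈ L a', p x ∈ K' (m₁ x) ∧ 1 ≤ m₁ x ∧ m₁ x ≤ a' ∧
        ∀ m, 1 ≤ m → m ≤ a' → p x ∈ K' m → m₁ x ≤ m) →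
      ∀ n, 1 ≤ n → n ≤ a →
        hDist {x ∈ L a' | m₁ x = n₂ x ∧ p x ∈ K n} (K n) ≤ r' :=
  stmt_7_general r' hr a a' b ha haa' ha'b K hKfin hKsep K' hK'mono hKK' hK'top L hLfin hLmono hdL
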